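/- For all real x with |x| < 1, arcsin(x) = ∑_{ℓ=0}^{∞} (1/4^ℓ)·C(2ℓ,ℓ)·x^(2ℓ+1)/(2ℓ+1). -/

import Mathlib

noncomputable section ArcsinAux2

open Real

/-- coefficients -/
def aa (ℓ : ℕ) : ℝ := (Nat.choose (2 * ℓ) ℓ : ℝ) / 4 ^ ℓ

lemma aa_nonneg (ℓ : ℕ) : 0 ≤ aa ℓ := by unfold aa; positivity

lemma aa_le_one (ℓ : ℕ) : aa ℓ ≤ 1 := by
  have h1 : Nat.choose (2 * ℓ) ℓ ≤ Nat.choose (2 * ℓ + 1) ℓ :=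
    Nat.choose_le_choose ℓ (Nat.le_succ _)
  have h2 : Nat.choose (2 * ℓ + 1) ℓ ≤ 4 ^ ℓ := Nat.choose_middle_le_pow ℓ
  have : (Nat.choose (2 * ℓ) ℓ : ℝ) ≤ 4 ^ ℓ := by exact_mod_cast h1.trans h2
  rw [aa, div_le_one (by positivity)]
  exact this

lemma aa_rec (ℓ : ℕ) : (2 * (ℓ : ℝ) + 2) * aa (ℓ + 1) = (2 * ℓ + 1) * aa ℓ := by
  have h := Nat.succ_mul_centralBinom_succ ℓ
  rw [Nat.centralBinom, Nat.centralBinom] at h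
  have h' : ((ℓ : ℝ) + 1) * (Nat.choose (2 * (ℓ + 1)) (ℓ + 1) : ℝ) =
      2 * (2 * ℓ + 1) * (Nat.choose (2 * ℓ) ℓ : ℝ) := by exact_mod_cast congrArg Nat.cast h
  rw [aa, aa]
  have h4 : (4 : ℝ) ^ (ℓ + 1) = 4 * 4 ^ ℓ := by ring
  field_simp [h4]
  ring_nf
  ring_nf at h'
  nlinarith [h', pow_pos (show (0:ℝ) < 4 by norm_num) ℓ]

/-- the summand of the arcsine series -/
def ff (ℓ : ℕ) (x : ℝ) : ℝ :=
  (1 / 4 ^ ℓ) * (Nat.choose (2 * ℓ) ℓ : ℝ) * x ^ (2 * ℓ + 1) / (2 * (ℓ : ℝ) + 1)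

lemma ff_eq (ℓ : ℕ) (x : ℝ) : ff ℓ x = aa ℓ * x ^ (2 * ℓ + 1) / (2 * ℓ + 1) := by
  rw [ff, aa]; ring

def gg (ℓ : ℕ) (x : ℝ) : ℝ := aa ℓ * x ^ (2 * ℓ)

def gg' (ℓ : ℕ) (x : ℝ) : ℝ := aa ℓ * (2 * ℓ) * x ^ (2 * ℓ - 1)

def GG (x : ℝ) : ℝ := ∑' ℓ, gg ℓ x

def GG' (x : ℝ) : ℝ := ∑' ℓ, gg' ℓ x

def FF (x : ℝ) : ℝ := ∑' ℓ, ff ℓ x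

lemma hasDerivAt_ff (ℓ : ℕ) (x : ℝ) : HasDerivAt (fun y => ff ℓ y) (gg ℓ x) x := by
  have h : HasDerivAt (fun y : ℝ => y ^ (2 * ℓ + 1))
      ((2 * ℓ + 1) * x ^ (2 * ℓ)) x := by
    simpa using hasDerivAt_pow (2 * ℓ + 1) x
  have h2 := (h.const_mul (aa ℓ)).div_const (2 * (ℓ : ℝ) + 1)
  have hne : (2 * (ℓ : ℝ) + 1) ≠ 0 := by positivity
  convert h2 using 1
  · rfl
  · rfl
  · funext y; rw [ff_eq]
  · rw [gg]; push_cast; field_simp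

lemma hasDerivAt_gg (ℓ : ℕ) (x : ℝ) : HasDerivAt (fun y => gg ℓ y) (gg' ℓ x) x := by
  have h : HasDerivAt (fun y : ℝ => y ^ (2 * ℓ))
      ((2 * ℓ : ℕ) * x ^ (2 * ℓ - 1)) x := hasDerivAt_pow (2 * ℓ) x
  have h2 := h.const_mul (aa ℓ)
  convert h2 using 1
  · rfl
  · rfl
  · rfl
  rw [gg']; push_cast; ring

lemma gg_bound {r x : ℝ} (hr : r < 1) (hx : |x| ≤ r) (ℓ : ℕ) :
    ‖gg ℓ x‖ ≤ (r ^ 2) ^ ℓ := by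
  have hr0 : 0 ≤ r := le_trans (abs_nonneg x) hx
  have : ‖gg ℓ x‖ = aa ℓ * |x| ^ (2 * ℓ) := by
    rw [gg, norm_eq_abs, abs_mul, abs_of_nonneg (aa_nonneg ℓ), abs_pow]
  rw [this, ← pow_mul]
  calc aa ℓ * |x| ^ (2 * ℓ) ≤ 1 * r ^ (2 * ℓ) := by
        apply mul_le_mul (aa_le_one ℓ) (pow_le_pow_left₀ (abs_nonneg x) hx _) (by positivity)
        norm_num
    _ = r ^ (2 * ℓ) := one_mul _

lemma summable_geom_sq {r : ℝ} (hr0 : 0 ≤ r) (hr : r < 1) :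
    Summable (fun ℓ : ℕ => (r ^ 2) ^ ℓ) :=
  summable_geometric_of_lt_one (by positivity) (by nlinarith)

lemma gg'_bound {r x : ℝ} (hr : r < 1) (hx : |x| ≤ r) (ℓ : ℕ) :
    ‖gg' ℓ x‖ ≤ 2 * ℓ * r ^ ℓ := by
  have hr0 : 0 ≤ r := le_trans (abs_nonneg x) hx
  have habs : ‖gg' ℓ x‖ = aa ℓ * (2 * ℓ) * |x| ^ (2 * ℓ - 1) := by
    rw [gg', norm_eq_abs, abs_mul, abs_mul, abs_of_nonneg (aa_nonneg ℓ), abs_pow]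
    norm_num
  rw [habs]
  rcases Nat.eq_zero_or_pos ℓ with h0 | hpos
  · subst h0; simp
  · have h1 : aa ℓ * (2 * ℓ) * |x| ^ (2 * ℓ - 1) ≤ 1 * (2 * ℓ) * r ^ (2 * ℓ - 1) := by
      apply mul_le_mul _ (pow_le_pow_left₀ (abs_nonneg x) hx _) (by positivity) (by positivity)
      apply mul_le_mul_of_nonneg_right (aa_le_one ℓ) (by positivity)
    have h2 : r ^ (2 * ℓ - 1) ≤ r ^ ℓ := by
      apply pow_le_pow_of_le_one hr0 hr.le
      omega
    calc aa ℓ * (2 * ℓ) * |x| ^ (2 * ℓ - 1) ≤ 1 * (2 * ℓ) * r ^ (2 * ℓ - 1) := h1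
      _ = (2 * ℓ) * r ^ (2 * ℓ - 1) := by ring
      _ ≤ 2 * ℓ * r ^ ℓ := by
          apply mul_le_mul_of_nonneg_left h2 (by positivity)

lemma summable_gg'_bound {r : ℝ} (hr0 : 0 ≤ r) (hr : r < 1) :
    Summable (fun ℓ : ℕ => 2 * (ℓ : ℝ) * r ^ ℓ) := by
  have := summable_pow_mul_geometric_of_norm_lt_one 1 (r := r) (by rwa [norm_eq_abs, abs_of_nonneg hr0])
  simpa [mul_comm, mul_assoc, pow_one] using this.mul_left 2

lemma summable_gg {r x : ℝ} (hr : r < 1) (hx : |x| ≤ r) :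
    Summable (fun ℓ => gg ℓ x) := by
  have hr0 : 0 ≤ r := le_trans (abs_nonneg x) hx
  exact Summable.of_norm_bounded (summable_geom_sq hr0 hr) (gg_bound hr hx)

lemma summable_gg' {r x : ℝ} (hr : r < 1) (hx : |x| ≤ r) :
    Summable (fun ℓ => gg' ℓ x) := by
  have hr0 : 0 ≤ r := le_trans (abs_nonneg x) hx
  exact Summable.of_norm_bounded (summable_gg'_bound hr0 hr) (gg'_bound hr hx)

lemma summable_ff {r x : ℝ} (hr : r < 1) (hx : |x| ≤ r) :
    Summable (fun ℓ => ff ℓ x) := by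
  have hr0 : 0 ≤ r := le_trans (abs_nonneg x) hx
  apply Summable.of_norm_bounded (summable_geom_sq hr0 hr)
  intro ℓ
  rw [ff_eq]
  have h1 : ‖aa ℓ * x ^ (2 * ℓ + 1) / (2 * (ℓ:ℝ) + 1)‖ ≤ ‖aa ℓ * x ^ (2 * ℓ + 1)‖ := by
    rw [norm_div]
    apply div_le_self (norm_nonneg _)
    have h2 : (0:ℝ) ≤ 2 * (ℓ:ℝ) + 1 := by positivity
    rw [norm_eq_abs, abs_of_nonneg h2]
    linarith [Nat.cast_nonneg (α := ℝ) ℓ]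
  refine h1.trans ?_
  have : ‖aa ℓ * x ^ (2 * ℓ + 1)‖ = aa ℓ * |x| ^ (2 * ℓ) * |x| := by
    rw [norm_eq_abs, abs_mul, abs_of_nonneg (aa_nonneg ℓ), abs_pow, pow_succ]
    ring
  rw [this]
  have hx1 : |x| ≤ 1 := hx.trans hr.le
  calc aa ℓ * |x| ^ (2 * ℓ) * |x| ≤ aa ℓ * |x| ^ (2 * ℓ) * 1 :=
        mul_le_mul_of_nonneg_left hx1 (mul_nonneg (aa_nonneg ℓ) (by positivity))
    _ = aa ℓ * |x| ^ (2 * ℓ) := by ring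
    _ ≤ 1 * r ^ (2 * ℓ) := mul_le_mul (aa_le_one ℓ)
        (pow_le_pow_left₀ (abs_nonneg x) hx _) (by positivity) (by norm_num)
    _ = (r ^ 2) ^ ℓ := by rw [one_mul, ← pow_mul, mul_comm 2 ℓ]

section Main

variable {r : ℝ} (hr0 : 0 < r) (hr1 : r < 1)

lemma mem_Ioo_abs {y : ℝ} (hy : y ∈ Set.Ioo (-r) r) : |y| ≤ r := by
  rw [abs_le]; exact ⟨hy.1.le, hy.2.le⟩

include hr0 hr1 in
lemma hasDerivAt_GG {y : ℝ} (hy : y ∈ Set.Ioo (-r) r) : HasDerivAt GG (GG' y) y := by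
  apply hasDerivAt_tsum_of_isPreconnected (summable_gg'_bound hr0.le hr1)
    isOpen_Ioo (convex_Ioo _ _).isPreconnected
    (fun ℓ z _ => hasDerivAt_gg ℓ z)
    (fun ℓ z hz => gg'_bound hr1 (mem_Ioo_abs hz) ℓ)
    (Set.mem_Ioo.mpr ⟨neg_neg_iff_pos.mpr hr0, hr0⟩)
    (summable_gg hr1 (by simpa using hr0.le))
    hy

include hr0 hr1 in
lemma hasDerivAt_FF {y : ℝ} (hy : y ∈ Set.Ioo (-r) r) : HasDerivAt FF (GG y) y := by
  apply hasDerivAt_tsum_of_isPreconnected (summable_geom_sq hr0.le hr1)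
    isOpen_Ioo (convex_Ioo _ _).isPreconnected
    (fun ℓ z _ => hasDerivAt_ff ℓ z)
    (fun ℓ z hz => gg_bound hr1 (mem_Ioo_abs hz) ℓ)
    (Set.mem_Ioo.mpr ⟨neg_neg_iff_pos.mpr hr0, hr0⟩)
    (summable_ff hr1 (by simpa using hr0.le))
    hy

include hr0 hr1 in
lemma ode {y : ℝ} (hy : y ∈ Set.Ioo (-r) r) : (1 - y ^ 2) * GG' y = y * GG y := by
  have hyr := mem_Ioo_abs hy
  have hSg' : Summable (fun ℓ => gg' ℓ y) := summable_gg' hr1 hyr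
  have hSg : Summable (fun ℓ => gg ℓ y) := summable_gg hr1 hyr
  -- T1 ℓ = (2ℓ+1) aa ℓ y^(2ℓ+1), T2 ℓ = 2ℓ aa ℓ y^(2ℓ+1)
  set T1 : ℕ → ℝ := fun ℓ => (2 * ℓ + 1) * aa ℓ * y ^ (2 * ℓ + 1) with hT1
  set T2 : ℕ → ℝ := fun ℓ => (2 * ℓ) * aa ℓ * y ^ (2 * ℓ + 1) with hT2
  have hT2eq : ∀ ℓ, T2 ℓ = y ^ 2 * gg' ℓ y := by
    intro ℓ
    rcases Nat.eq_zero_or_pos ℓ with h0 | hpos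
    · subst h0; norm_num [hT2, gg']
    · have hidx : 2 * ℓ - 1 + 2 = 2 * ℓ + 1 := by omega
      simp only [hT2, gg']
      rw [← hidx, pow_add]
      ring
  have hST2 : Summable T2 := by
    exact ((hSg'.mul_left (y ^ 2)).congr fun ℓ => (hT2eq ℓ).symm)
  have hSA : Summable (fun ℓ => aa ℓ * y ^ (2 * ℓ + 1)) := by
    have := hSg.mul_left y
    apply Summable.congr this
    intro ℓ; rw [gg, pow_succ]; ring
  have hST1 : Summable T1 := by
    apply Summable.congr (hST2.add hSA)
    intro ℓ; simp only [hT1, hT2]; ring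
  have key1 : GG' y = ∑' ℓ, T1 ℓ := by
    rw [GG', hSg'.tsum_eq_zero_add]
    have h0 : gg' 0 y = 0 := by simp [gg']
    rw [h0, zero_add]
    apply tsum_congr
    intro ℓ
    have hrec := aa_rec ℓ
    have hidx : 2 * (ℓ + 1) - 1 = 2 * ℓ + 1 := by omega
    simp only [gg', hidx, hT1]
    push_cast
    linear_combination y ^ (2 * ℓ + 1) * hrec
  have key2 : y ^ 2 * GG' y = ∑' ℓ, T2 ℓ := by
    rw [GG', ← tsum_mul_left]
    exact tsum_congr fun ℓ => (hT2eq ℓ).symm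
  have key3 : GG' y - y ^ 2 * GG' y = ∑' ℓ, aa ℓ * y ^ (2 * ℓ + 1) := by
    rw [key2, key1, ← hST1.tsum_sub hST2]
    apply tsum_congr
    intro ℓ; simp only [hT1, hT2]; ring
  have key4 : y * GG y = ∑' ℓ, aa ℓ * y ^ (2 * ℓ + 1) := by
    rw [GG, ← tsum_mul_left]
    apply tsum_congr
    intro ℓ; rw [gg, pow_succ]; ring
  rw [key4, ← key3]; ring

include hr0 hr1 in
lemma GG_eq_inv_sqrt {y : ℝ} (hy : y ∈ Set.Ioo (-r) r) :
    GG y = 1 / Real.sqrt (1 - y ^ 2) := by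
  -- φ z = GG z * sqrt (1 - z^2) is constant on Ioo (-r) r
  set s := Set.Ioo (-r) r with hs
  have hsq_pos : ∀ z ∈ s, (0:ℝ) < 1 - z ^ 2 := by
    intro z hz
    have ha := mem_Ioo_abs hz
    have h1 : |z| ^ 2 ≤ r ^ 2 := pow_le_pow_left₀ (abs_nonneg z) ha 2
    have h2 : r ^ 2 < 1 := by nlinarith
    have h3 := sq_abs z
    linarith
  have hderiv : ∀ z ∈ s, HasDerivAt (fun w => GG w * Real.sqrt (1 - w ^ 2)) 0 z := by
    intro z hz
    have hpos := hsq_pos z hz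
    have hsqrt_pos : 0 < Real.sqrt (1 - z ^ 2) := Real.sqrt_pos.mpr hpos
    have hinner : HasDerivAt (fun w : ℝ => 1 - w ^ 2) (-(2 * z)) z := by
      simpa using ((hasDerivAt_pow 2 z).const_sub 1)
    have hss : Real.sqrt (1 - z ^ 2) * Real.sqrt (1 - z ^ 2) = 1 - z ^ 2 :=
      Real.mul_self_sqrt hpos.le
    have hsqrt : HasDerivAt (fun w => Real.sqrt (1 - w ^ 2))
        (-z / Real.sqrt (1 - z ^ 2)) z := by
      have h := (Real.hasDerivAt_sqrt hpos.ne').comp z hinner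
      convert h using 1
      · rfl
      · rfl
      · rfl
      field_simp
    have hG := hasDerivAt_GG hr0 hr1 hz
    have hmul := hG.mul hsqrt
    convert hmul using 1
    · rfl
    · rfl
    · rfl
    have hode := ode hr0 hr1 hz
    have hval : GG' z * Real.sqrt (1 - z ^ 2) = z * GG z / Real.sqrt (1 - z ^ 2) := by
      rw [eq_div_iff hsqrt_pos.ne']
      linear_combination GG' z * hss + hode
    rw [hval]
    ring
  -- constancy
  have hconst : ∀ z ∈ s, GG z * Real.sqrt (1 - z ^ 2) = GG 0 * Real.sqrt (1 - 0 ^ 2) := by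
    intro z hz
    have h0s : (0:ℝ) ∈ s := Set.mem_Ioo.mpr ⟨neg_neg_iff_pos.mpr hr0, hr0⟩
    refine Convex.is_const_of_fderivWithin_eq_zero (𝕜 := ℝ)
      (f := fun w => GG w * Real.sqrt (1 - w ^ 2)) (convex_Ioo (-r) r) ?_ ?_ hz h0s
    · intro w hw
      exact ((hderiv w hw).differentiableAt).differentiableWithinAt
    · intro w hw
      rw [fderivWithin_of_isOpen isOpen_Ioo hw]
      rw [(hderiv w hw).hasFDerivAt.fderiv]
      ext t
      simp
  have hG0 : GG 0 = 1 := by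
    rw [GG]
    rw [tsum_eq_single 0]
    · simp [gg, aa]
    · intro ℓ hℓ
      have : 2 * ℓ ≠ 0 := by omega
      simp [gg, zero_pow this]
  have hz := hconst y hy
  rw [hG0] at hz
  simp only [one_mul] at hz
  norm_num at hz
  have hpos := hsq_pos y hy
  have hsqrt_pos : 0 < Real.sqrt (1 - y ^ 2) := Real.sqrt_pos.mpr hpos
  rw [eq_div_iff hsqrt_pos.ne']
  exact hz

include hr0 hr1 in
lemma FF_eq_arcsin {y : ℝ} (hy : y ∈ Set.Ioo (-r) r) : FF y = Real.arcsin y := by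
  set s := Set.Ioo (-r) r with hs
  have h0s : (0:ℝ) ∈ s := Set.mem_Ioo.mpr ⟨neg_neg_iff_pos.mpr hr0, hr0⟩
  have hderiv : ∀ z ∈ s, HasDerivAt (fun w => FF w - Real.arcsin w) 0 z := by
    intro z hz
    have hzr := mem_Ioo_abs hz
    have hz1 : z ≠ 1 := by intro h; rw [h] at hzr; rw [abs_one] at hzr; linarith
    have hzm1 : z ≠ -1 := by
      intro h; rw [h] at hzr; rw [abs_neg, abs_one] at hzr; linarith
    have hF := hasDerivAt_FF hr0 hr1 hz
    have hA := Real.hasDerivAt_arcsin hzm1 hz1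
    have := hF.sub hA
    convert this using 1
    · rfl
    · rfl
    · rfl
    rw [GG_eq_inv_sqrt hr0 hr1 hz]
    ring
  have hconst : FF y - Real.arcsin y = FF 0 - Real.arcsin 0 := by
    refine Convex.is_const_of_fderivWithin_eq_zero (𝕜 := ℝ)
      (f := fun w => FF w - Real.arcsin w) (convex_Ioo (-r) r) ?_ ?_ hy h0s
    · intro w hw
      exact ((hderiv w hw).differentiableAt).differentiableWithinAt
    · intro w hw
      rw [fderivWithin_of_isOpen isOpen_Ioo hw]
      rw [(hderiv w hw).hasFDerivAt.fderiv]
      ext t; simp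
  have hF0 : FF 0 = 0 := by
    rw [FF]
    convert tsum_zero with ℓ
    rw [ff_eq]
    simp [zero_pow (Nat.succ_ne_zero (2 * ℓ))]
  rw [hF0, Real.arcsin_zero, sub_zero] at hconst
  linarith [hconst]

end Main

end ArcsinAux2

theorem arcsine_identity_12 (x : ℝ) (hx : |x| < 1) :
    HasSum (fun ℓ : ℕ =>
        (1 / 4 ^ ℓ) * (Nat.choose (2 * ℓ) ℓ : ℝ) * x ^ (2 * ℓ + 1) / (2 * (ℓ : ℝ) + 1))
      (Real.arcsin x) := by
  set r : ℝ := (|x| + 1) / 2 with hr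
  have hr0 : 0 < r := by positivity
  have hr1 : r < 1 := by rw [hr]; linarith
  have hxr : |x| ≤ r := by rw [hr]; linarith
  have hxs : x ∈ Set.Ioo (-r) r := by
    rw [Set.mem_Ioo]
    constructor
    · have := neg_abs_le x; rw [hr]; cases abs_lt.mp hx; linarith [abs_nonneg x, neg_abs_le x]
    · calc x ≤ |x| := le_abs_self x
        _ < r := by rw [hr]; linarith
  have hsum : Summable (fun ℓ => ff ℓ x) := summable_ff hr1 hxr
  have := hsum.hasSum
  rw [show ∑' ℓ, ff ℓ x = FF x from rfl,
    FF_eq_arcsin hr0 hr1 hxs] at this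
  exact this
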